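/- The subspace A(x,y) = { f(x,y) ∈ ℂ[[x,x^{-1},y,y^{-1}]] : (x-y)^k f(x,y) = 0 for some k ∈ ℕ } decomposes as the direct sum A(x,y) = ⊕_{n∈ℕ} ℂ[[y,y^{-1}]] Δ^(n)(x,y), i.e. every such f has a unique expression as a finite sum Σ_n g_n(y) Δ^(n)(x,y). -/

import Mathlib

/-- Doubly infinite formal series `Σ_{m,n} a(m,n) x^m y^n` with coefficients in `U`,
represented by the coefficient function `(m, n) ↦ a(m,n)`. -/
abbrev FS (U : Type*) := ℤ → ℤ → U

section Defs

variable {U : Type*} [AddCommGroup U] [Module ℂ U]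

/-- Formal partial derivative `∂/∂x`. -/
def dX (f : FS U) : FS U := fun m n => (m + 1) • f (m + 1) n

/-- Formal partial derivative `∂/∂y`. -/
def dY (f : FS U) : FS U := fun m n => (n + 1) • f m (n + 1)

/-- Multiplication by `(x - y)`. -/
def xmy (f : FS U) : FS U := fun m n => f (m - 1) n - f m (n - 1)

/-- `Δ(x,y) = y⁻¹ δ(x/y) = Σ_{m ∈ ℤ} x^m y^{-m-1}`. -/
def Delta0 : FS ℂ := fun m n => if n = -m - 1 then 1 else 0

/-- `Δ^(k)(x,y) = (∂/∂x)^k (y⁻¹ δ(x/y))`. -/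
noncomputable def Dk (k : ℕ) : FS ℂ := dX^[k] Delta0

/-- The product `f(y) · g(x,y)` of a series `f(y) = Σ_j f_j y^j` in `y` alone with a
series `g ∈ ℂ[[x,x⁻¹,y,y⁻¹]]`; well defined (as a genuinely finite sum) whenever each
coefficient of `x^m` in `g` is a monomial in `y`, as is the case for `g = Δ^(k)`. -/
noncomputable def ymul (f : ℤ → U) (g : FS ℂ) : FS U :=
  fun m n => ∑ᶠ j : ℤ, g m (n - j) • f j

/-- The product `f(x) · g(x,y)` of a series `f(x)` in `x` alone with `g`. -/
noncomputable def xmul (f : ℤ → ℂ) (g : FS ℂ) : FS ℂ :=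
  fun m n => ∑ᶠ j : ℤ, f j * g (m - j) n

/-- Formal derivative of a one-variable series `Σ_j f_j y^j`. -/
noncomputable def fder (f : ℤ → ℂ) : ℤ → ℂ := fun j => (j + 1) • f (j + 1)

end Defs

open Finset

noncomputable section Aux

/-- Forward difference operator on one-variable sequences. -/
def D (F : ℤ → ℂ) : ℤ → ℂ := fun m => F (m+1) - F m

/-- `pp n m = (m+1)(m+2)⋯(m+n)`. -/
def pp (n : ℕ) (m : ℤ) : ℂ := ∏ i ∈ range n, ((m : ℂ) + i + 1)

lemma pp_zero (m : ℤ) : pp 0 m = 1 := by simp [pp]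

lemma pp_succ (n : ℕ) (m : ℤ) : pp (n+1) m = pp n m * ((m:ℂ) + n + 1) :=
  prod_range_succ _ _

lemma pp_succ' (n : ℕ) (m : ℤ) : pp (n+1) m = ((m:ℂ)+1) * pp n (m+1) := by
  rw [pp, prod_range_succ', pp]
  have h1 : ((m:ℂ) + ((0:ℕ):ℂ) + 1) = (m:ℂ)+1 := by push_cast; ring
  rw [h1, mul_comm]
  congr 1
  apply Finset.prod_congr rfl
  intro i _
  push_cast
  ring

lemma pp_eval_zero {n j : ℕ} (h : j < n) : pp n (-(j:ℤ)-1) = 0 := by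
  apply Finset.prod_eq_zero (Finset.mem_range.mpr h)
  push_cast
  ring

lemma pp_diag_ne (j : ℕ) : pp j (-(j:ℤ)-1) ≠ 0 := by
  apply Finset.prod_ne_zero_iff.mpr
  intro i hi
  have hij : i < j := Finset.mem_range.mp hi
  have : ((-(j:ℤ)-1 : ℤ) : ℂ) + i + 1 = (i : ℂ) - j := by push_cast; ring
  rw [this]
  intro hc
  have : (i : ℂ) = (j : ℂ) := by linear_combination hc
  exact absurd (Nat.cast_injective this) hij.ne

lemma D_pp (n : ℕ) : D (pp (n+1)) = fun m => ((n:ℂ)+1) * pp n (m+1) := by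
  funext m
  rw [D, pp_succ n (m+1), pp_succ' n m]
  push_cast
  ring

lemma D_sub (F G : ℤ → ℂ) : D (F - G) = D F - D G := by
  funext m; simp [D]; ring

lemma D_add (F G : ℤ → ℂ) : D (F + G) = D F + D G := by
  funext m; simp [D]; ring

lemma D_smul (c : ℂ) (F : ℤ → ℂ) : D (c • F) = c • D F := by
  funext m; simp [D]; ring

lemma D_neg (F : ℤ → ℂ) : D (-F) = -(D F) := by funext m; simp [D]; ring

lemma D_zero : D (0 : ℤ → ℂ) = 0 := by funext m; simp [D]

lemma D_shift (F : ℤ → ℂ) (a : ℤ) : D (fun m => F (m + a)) = fun m => D F (m + a) := by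
  funext m
  simp only [D]
  ring_nf

lemma Dit_zero (k : ℕ) : D^[k] (0 : ℤ → ℂ) = 0 :=
  Function.iterate_fixed D_zero k

lemma Dit_sub (k : ℕ) (F G : ℤ → ℂ) : D^[k] (F - G) = D^[k] F - D^[k] G := by
  induction k generalizing F G with
  | zero => simp
  | succ k ih => simp only [Function.iterate_succ_apply, D_sub, ih]

lemma Dit_add (k : ℕ) (F G : ℤ → ℂ) : D^[k] (F + G) = D^[k] F + D^[k] G := by
  induction k generalizing F G with
  | zero => simp
  | succ k ih => simp only [Function.iterate_succ_apply, D_add, ih]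

lemma Dit_smul (k : ℕ) (c : ℂ) (F : ℤ → ℂ) : D^[k] (c • F) = c • D^[k] F := by
  induction k generalizing F with
  | zero => simp
  | succ k ih => simp only [Function.iterate_succ_apply, D_smul, ih]

lemma Dit_neg (k : ℕ) (F : ℤ → ℂ) : D^[k] (-F) = -(D^[k] F) := by
  induction k generalizing F with
  | zero => simp
  | succ k ih => rw [Function.iterate_succ_apply, D_neg, ih, Function.iterate_succ_apply]

lemma Dit_sum (k : ℕ) {α : Type*} (s : Finset α) (F : α → ℤ → ℂ) :
    D^[k] (∑ a ∈ s, F a) = ∑ a ∈ s, D^[k] (F a) := by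
  classical
  induction s using Finset.induction_on with
  | empty => simpa using Dit_zero k
  | insert _ _ hn ih => rw [Finset.sum_insert hn, Finset.sum_insert hn, Dit_add, ih]

lemma Dit_shift (k : ℕ) (F : ℤ → ℂ) (a : ℤ) :
    D^[k] (fun m => F (m + a)) = fun m => D^[k] F (m + a) := by
  induction k generalizing F with
  | zero => simp
  | succ k ih => rw [Function.iterate_succ_apply, D_shift, ih,
      Function.iterate_succ_apply]

lemma Dit_pp_shift (n : ℕ) (a : ℤ) : D^[n+1] (fun m => pp n (m + a)) = 0 := by
  induction n generalizing a with
  | zero =>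
    funext m
    simp [Function.iterate_one, D, pp_zero]
  | succ n ih =>
    rw [Function.iterate_succ_apply, D_shift, D_pp]
    have : (fun m => ((n:ℂ)+1) * pp n (m + a + 1)) =
        ((n:ℂ)+1) • fun m => pp n (m + (a+1)) := by
      funext m
      show ((n:ℂ)+1) * pp n (m + a + 1) = ((n:ℂ)+1) * pp n (m + (a+1))
      rw [add_assoc]
    rw [this, Dit_smul, ih (a+1), smul_zero]

lemma Dit_pp (n k : ℕ) (h : n < k) : D^[k] (pp n) = 0 := by
  have h1 : k = (k - (n+1)) + (n+1) := by omega
  have h2 : pp n = fun m => pp n (m + 0) := by funext m; simp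
  rw [h1, Function.iterate_add_apply, h2, Dit_pp_shift, Dit_zero]

lemma const_of_D {F : ℤ → ℂ} (h : D F = 0) : ∀ m, F m = F 0 := by
  have hs : ∀ m, F (m + 1) = F m := by
    intro m
    have := congrFun h m
    simp [D] at this
    linear_combination this
  intro m
  induction m using Int.induction_on with
  | zero => rfl
  | succ i ih => rw [hs, ih]
  | pred i ih => rw [← ih, ← hs (-(i:ℤ) - 1)]; ring_nf

/-- A sequence with vanishing `k`-th difference vanishing at `k` consecutive points
is zero. -/
lemma eq_zero_of_diff (k : ℕ) (a : ℤ) (F : ℤ → ℂ) (h : D^[k] F = 0)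
    (hv : ∀ i : ℕ, i < k → F (a + i) = 0) : F = 0 := by
  induction k generalizing F with
  | zero => simpa using h
  | succ k ih =>
    have hDF : D F = 0 := by
      apply ih (D F)
      · rw [← Function.iterate_succ_apply]; exact h
      · intro i hi
        have h1 := hv i (by omega)
        have h2 := hv (i+1) (by omega)
        simp only [D]
        rw [show a + (i:ℤ) + 1 = a + ((i:ℕ)+1 : ℕ) by push_cast; ring, h2, h1, sub_zero]
    have hc := const_of_D hDF
    funext m
    have h0 := hv 0 (by omega)
    simp at h0
    rw [hc m, ← hc a, h0]
    rfl

/-- Triangularly-determined coefficients: `coeffA F j` gives the first `j`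
coefficients (at indices `< j`). -/
def coeffA (F : ℤ → ℂ) : ℕ → ℕ → ℂ
  | 0 => fun _ => 0
  | j+1 => fun n =>
      if n = j then
        (F (-(j:ℤ)-1) - ∑ i ∈ range j, coeffA F j i * pp i (-(j:ℤ)-1)) / pp j (-(j:ℤ)-1)
      else coeffA F j n

def coeff (F : ℤ → ℂ) (n : ℕ) : ℂ := coeffA F (n+1) n

lemma coeffA_eq (F : ℤ → ℂ) (j n : ℕ) (h : n < j) : coeffA F j n = coeff F n := by
  induction j with
  | zero => omega
  | succ j ih =>
    rcases Nat.lt_succ_iff_lt_or_eq.mp h with h' | h'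
    · have hne : n ≠ j := by omega
      rw [show coeffA F (j+1) n = coeffA F j n by simp [coeffA, hne], ih h']
    · subst h'
      rfl

lemma coeff_key (F : ℤ → ℂ) (j : ℕ) :
    coeff F j * pp j (-(j:ℤ)-1)
      = F (-(j:ℤ)-1) - ∑ i ∈ range j, coeff F i * pp i (-(j:ℤ)-1) := by
  have : coeff F j = (F (-(j:ℤ)-1) - ∑ i ∈ range j, coeff F i * pp i (-(j:ℤ)-1))
      / pp j (-(j:ℤ)-1) := by
    show coeffA F (j+1) j = _
    simp only [coeffA, eq_self_iff_true, if_true]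
    have hsum : ∑ i ∈ range j, coeffA F j i * pp i (-(j:ℤ)-1)
        = ∑ i ∈ range j, coeff F i * pp i (-(j:ℤ)-1) :=
      Finset.sum_congr rfl fun i hi => by
        rw [coeffA_eq F j i (Finset.mem_range.mp hi)]
    rw [hsum]
  rw [this, div_mul_cancel₀ _ (pp_diag_ne j)]

lemma coeff_sum_eval (F : ℤ → ℂ) {j k : ℕ} (hj : j < k) :
    ∑ n ∈ range k, coeff F n * pp n (-(j:ℤ)-1) = F (-(j:ℤ)-1) := by
  have hsub : range (j+1) ⊆ range k := Finset.range_subset_range.mpr (by omega)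
  rw [← Finset.sum_subset hsub (by
    intro n _ hn
    have : j < n := by simp at hn; omega
    rw [pp_eval_zero this, mul_zero])]
  rw [Finset.sum_range_succ, coeff_key]
  ring

/-- Existence of the polynomial expansion of a sequence with vanishing `k`-th
difference in the basis `pp 0, …, pp (k-1)`. -/
lemma exists_expand (k : ℕ) (F : ℤ → ℂ) (h : D^[k] F = 0) :
    ∀ m, F m = ∑ n ∈ range k, coeff F n * pp n m := by
  have hG : (F - ∑ n ∈ range k, coeff F n • pp n) = 0 := by
    apply eq_zero_of_diff k (-(k:ℤ))
    · rw [Dit_sub, h, Dit_sum, zero_sub, neg_eq_zero]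
      apply Finset.sum_eq_zero
      intro n hn
      rw [Dit_smul, Dit_pp n k (Finset.mem_range.mp hn), smul_zero]
    · intro i hi
      have hj : (-(k:ℤ) + i) = -((k - 1 - i : ℕ) : ℤ) - 1 := by
        push_cast [Nat.cast_sub (by omega : i ≤ k - 1), Nat.cast_sub (by omega : 1 ≤ k)]
        ring
      have hlt : k - 1 - i < k := by omega
      simp only [Pi.sub_apply, Finset.sum_apply, Pi.smul_apply, smul_eq_mul]
      rw [hj, coeff_sum_eval F hlt, sub_self]
  intro m
  have := congrFun hG m
  simp only [Pi.sub_apply, Finset.sum_apply, Pi.smul_apply, smul_eq_mul,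
    Pi.zero_apply] at this
  linear_combination this

/-- Linear independence of the `pp n` over `ℤ`. -/
lemma coeff_unique (s : Finset ℕ) (c : ℕ → ℂ) (h0 : ∀ n, n ∉ s → c n = 0)
    (hz : ∀ m : ℤ, ∑ n ∈ s, c n * pp n m = 0) : ∀ n, c n = 0 := by
  intro n
  induction n using Nat.strong_induction_on with
  | _ n ih =>
    by_cases hns : n ∈ s
    · have := hz (-(n:ℤ)-1)
      rw [Finset.sum_eq_single_of_mem n hns (fun i hi hine => by
        rcases lt_or_gt_of_ne hine with h' | h'
        · rw [ih i h', zero_mul]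
        · rw [pp_eval_zero h', mul_zero])] at this
      exact (mul_eq_zero.mp this).resolve_right (pp_diag_ne n)
    · exact h0 n hns

lemma Dk_eq (n : ℕ) (m t : ℤ) :
    Dk n m t = if t = -m - n - 1 then pp n m else 0 := by
  induction n generalizing m with
  | zero => simp [Dk, Delta0, pp_zero]
  | succ n ih =>
    have : Dk (n+1) = dX (Dk n) := by
      rw [Dk, Function.iterate_succ_apply', Dk]
    rw [this]
    simp only [dX, ih (m+1)]
    by_cases ht : t = -m - (n+1:ℕ) - 1
    · rw [if_pos ht, if_pos (by push_cast at ht ⊢; omega), pp_succ']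
      rw [zsmul_eq_mul]
      push_cast
      ring
    · rw [if_neg ht, if_neg (by push_cast at ht ⊢; omega), smul_zero]

lemma ymul_Dk (gn : ℤ → ℂ) (n : ℕ) (m l : ℤ) :
    ymul gn (Dk n) m l = pp n m * gn (l + m + n + 1) := by
  rw [ymul]
  rw [finsum_eq_single _ (l + m + n + 1) (fun j hj => by
    rw [Dk_eq, if_neg (by omega), zero_smul])]
  rw [Dk_eq, if_pos (by ring), smul_eq_mul]

lemma ymul_zero (g : FS ℂ) : ymul (0 : ℤ → ℂ) g = 0 := by
  funext m l
  simp [ymul]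

/-- Diagonal slices of a two-variable series. -/
def Diag (f : FS ℂ) : ℤ → ℤ → ℂ := fun s m => f m (s - m - 1)

lemma Diag_xmy (f : FS ℂ) (s m : ℤ) :
    Diag (xmy f) s m = -(D (Diag f (s-1)) (m-1)) := by
  simp only [Diag, xmy, D]
  ring_nf

lemma Diag_xmy_iter (k : ℕ) (f : FS ℂ) (s m : ℤ) :
    Diag (xmy^[k] f) s m = (-1:ℂ)^k * D^[k] (Diag f (s - k)) (m - k) := by
  induction k generalizing f s m with
  | zero => simp
  | succ k ih =>
    rw [Function.iterate_succ_apply, ih (xmy f) s m]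
    have h1 : Diag (xmy f) (s - k) = fun m' => (-(D (Diag f (s - k - 1)))) (m' + (-1)) := by
      funext m'
      rw [show m' + (-1:ℤ) = m' - 1 by ring, Diag_xmy]
      rfl
    rw [h1, Dit_shift, Dit_neg]
    have h2 : D^[k] (D (Diag f (s - k - 1))) = D^[k+1] (Diag f (s - k - 1)) :=
      (Function.iterate_succ_apply D (k) (Diag f (s - k -1))).symm
    simp only [Pi.neg_apply, h2]
    rw [show s - (k:ℤ) - 1 = s - ((k:ℕ)+1:ℕ) by push_cast; ring,
        show m - (k:ℤ) + (-1) = m - ((k:ℕ)+1:ℕ) by push_cast; ring]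
    ring

lemma diag_zero_of_xmy {k : ℕ} {f : FS ℂ} (h : xmy^[k] f = 0) (s : ℤ) :
    D^[k] (Diag f s) = 0 := by
  funext m
  show D^[k] (Diag f s) m = 0
  have := Diag_xmy_iter k f (s + k) (m + k)
  rw [h] at this
  simp only [Diag, Pi.zero_apply] at this
  have h2 : s + (k:ℤ) - k = s := by ring
  have h3 : m + (k:ℤ) - k = m := by ring
  rw [h2, h3] at this
  rcases mul_eq_zero.mp this.symm with h' | h'
  · exact absurd h' (by simp)
  · exact h'

/-- Evaluating `g.sum (fun n gn => ymul gn (Dk n))` pointwise via a support superset. -/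
lemma sum_eval (g : ℕ →₀ (ℤ → ℂ)) (s : Finset ℕ) (hs : g.support ⊆ s) (m l : ℤ) :
    (g.sum fun n gn => ymul gn (Dk n)) m l
      = ∑ n ∈ s, pp n m * (g n) (l + m + n + 1) := by
  rw [Finsupp.sum]
  have h1 : (∑ n ∈ g.support, ymul (g n) (Dk n)) m l
      = ∑ n ∈ g.support, ymul (g n) (Dk n) m l := by
    rw [Finset.sum_apply, Finset.sum_apply]
  rw [h1, Finset.sum_subset hs (fun n _ hn => by
    rw [Finsupp.notMem_support_iff.mp hn, ymul_zero]
    rfl)]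
  exact Finset.sum_congr rfl fun n _ => ymul_Dk _ _ _ _

end Aux

/-- every `f ∈ ℂ[[x,x⁻¹,y,y⁻¹]]` killed by some power of `(x-y)`
has a unique expression as a finite sum `Σ_n g_n(y) Δ^(n)(x,y)`; that is,
`A(x,y) = ⊕_{n∈ℕ} ℂ[[y,y⁻¹]] Δ^(n)(x,y)`. -/
theorem stmt9 (f : FS ℂ) (h : ∃ k : ℕ, xmy^[k] f = 0) :
    ∃! g : ℕ →₀ (ℤ → ℂ), f = g.sum fun n gn => ymul gn (Dk n) := by
  classical
  obtain ⟨k, hk⟩ := h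
  -- uniqueness of the representation
  have key : ∀ g1 g2 : ℕ →₀ (ℤ → ℂ),
      (g1.sum fun n gn => ymul gn (Dk n)) = (g2.sum fun n gn => ymul gn (Dk n)) →
      g1 = g2 := by
    intro g1 g2 heq
    apply Finsupp.ext
    intro n
    funext j
    set s : Finset ℕ := g1.support ∪ g2.support with hs
    set s0 : ℤ := j - (n:ℤ) with hs0
    have hz : ∀ m : ℤ, ∑ i ∈ s, (g1 i (s0 + i) - g2 i (s0 + i)) * pp i m = 0 := by
      intro m
      have e1 := sum_eval g1 s Finset.subset_union_left m (s0 - m - 1)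
      have e2 := sum_eval g2 s Finset.subset_union_right m (s0 - m - 1)
      rw [← heq] at e2
      have e3 : ∑ i ∈ s, pp i m * g1 i (s0 - m - 1 + m + i + 1)
          = ∑ i ∈ s, pp i m * g2 i (s0 - m - 1 + m + i + 1) := e1.symm.trans e2
      calc ∑ i ∈ s, (g1 i (s0 + i) - g2 i (s0 + i)) * pp i m
          = (∑ i ∈ s, pp i m * g1 i (s0 - m - 1 + m + i + 1))
            - ∑ i ∈ s, pp i m * g2 i (s0 - m - 1 + m + i + 1) := by
            rw [← Finset.sum_sub_distrib]
            apply Finset.sum_congr rfl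
            intro i _
            rw [show s0 - m - 1 + m + i + 1 = s0 + i by ring]
            ring
        _ = 0 := by rw [e3, sub_self]
    have h0 : ∀ i, i ∉ s → g1 i (s0 + i) - g2 i (s0 + i) = 0 := by
      intro i hi
      rw [hs, Finset.mem_union, not_or] at hi
      rw [Finsupp.notMem_support_iff.mp hi.1, Finsupp.notMem_support_iff.mp hi.2]
      simp
    have := coeff_unique s _ h0 hz n
    have hj : s0 + (n:ℤ) = j := by rw [hs0]; ring
    rw [hj] at this
    exact sub_eq_zero.mp this
  -- existence
  have hF : ∀ s, D^[k] (Diag f s) = 0 := diag_zero_of_xmy hk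
  set gf : ℕ → ℤ → ℂ := fun n =>
    if n < k then (fun j => coeff (Diag f (j - n)) n) else 0 with hgf
  have hgfs : ∀ n, gf n ≠ 0 → n ∈ Finset.range k := by
    intro n hn
    rw [Finset.mem_range]
    by_contra hnk
    exact hn (by rw [hgf]; simp [hnk])
  set g : ℕ →₀ (ℤ → ℂ) := Finsupp.onFinset (Finset.range k) gf hgfs with hgdef
  have hsupp : g.support ⊆ Finset.range k := Finsupp.support_onFinset_subset
  have hmain : f = g.sum fun n gn => ymul gn (Dk n) := by
    funext m l
    rw [sum_eval g (Finset.range k) hsupp m l]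
    have hexp := exists_expand k (Diag f (l + m + 1)) (hF _) m
    have hd : Diag f (l + m + 1) m = f m l := by
      rw [Diag, show l + m + 1 - m - 1 = l by ring]
    rw [hd] at hexp
    rw [hexp]
    apply Finset.sum_congr rfl
    intro n hn
    have hnk : n < k := Finset.mem_range.mp hn
    have hgn : g n = gf n := rfl
    rw [hgn, hgf]
    simp only [if_pos hnk]
    rw [show l + m + (n:ℤ) + 1 - n = l + m + 1 by ring]
    ring
  exact ⟨g, hmain, fun y hy => key y g (hy.symm.trans hmain)⟩
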